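/- Let n ≥ 1, let μ = (μ₁,…,μ_k) be a weak composition of n, and let μ′ be any rearrangement of μ. Define F_μ := Σ t^{des(w)+1}(1+t)^{n−1−2·des(w)}, the sum being over all multiset permutations w of M(μ) that have no double descent and satisfy w_{n−1} ≤ w_n. Then F_μ = F_{μ′} as polynomials in t. -/

import Mathlib

attribute [local instance] Classical.propDecidable

open Polynomial

/-- The number of descents of the word `w = w₁ ⋯ w_m`:
indices `i ∈ [m-1]` with `w_i > w_{i+1}`. -/
noncomputable def desF {m : ℕ} (w : Fin m → ℕ) : ℕ :=
  (Finset.univ.filter fun i : Fin (m - 1) =>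
      w ⟨(i : ℕ) + 1, by have := i.2; omega⟩ < w ⟨(i : ℕ), by have := i.2; omega⟩).card

/-- The word `w = w₁ ⋯ w_m` has no double descent (no `i` with `w_i > w_{i+1} > w_{i+2}`). -/
def NDDF {m : ℕ} (w : Fin m → ℕ) : Prop :=
  ∀ i : ℕ, ∀ h : i + 2 < m,
    ¬(w ⟨i + 1, by omega⟩ < w ⟨i, by omega⟩ ∧ w ⟨i + 2, h⟩ < w ⟨i + 1, by omega⟩)

/-- `w` is a multiset permutation of the multiset `M(μ)` in which each letter
`i ∈ [k]` appears with multiplicity `μ_i`. -/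
def IsMsPermOf {n k : ℕ} (μ : Fin k → ℕ) (w : Fin n → ℕ) : Prop :=
  (∀ j, ∃ i : Fin k, w j = (i : ℕ) + 1) ∧
    ∀ i : Fin k, (Finset.univ.filter fun j : Fin n => w j = (i : ℕ) + 1).card = μ i

/-- `F_μ = ∑ t^{des w + 1} (1+t)^{n-1-2 des w}`, summed over all multiset permutations
`w` of `M(μ)` with no double descent satisfying `w_{n-1} ≤ w_n`. -/
noncomputable def Fpoly (n k : ℕ) (μ : Fin k → ℕ) : Polynomial ℤ :=
  ∑ w ∈ (Fintype.piFinset fun _ : Fin n => Finset.Icc 1 k).filter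
      (fun w => IsMsPermOf μ w ∧ NDDF w ∧
        ∀ h : 0 < n, w ⟨n - 2, by omega⟩ ≤ w ⟨n - 1, by omega⟩),
    (X : Polynomial ℤ) ^ (desF w + 1) * (X + 1) ^ (n - 1 - 2 * desF w)

/-!
Group the words by descent set. The two conditions on `w` in `Fpoly` depend only on `descentSet w`,
so `Fpoly n k μ` is a combination of the numbers `β_μ(S)` of multiset permutations with descent set
exactly `S`. As `α_μ(S) = #{w | descentSet w ⊆ S} = ∑_{T ⊆ S} β_μ(T)`, induction on `S` reduces
the invariance of `β_μ` under rearranging `μ` to that of `α_μ`. A word with descent set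
inside `S` is weakly increasing on each block of positions cut out by `S`, hence is determined by
the letters in each block. Relabelling the letters by `τ` and re-sorting every block therefore
injects `α_{μ ∘ τ}(S)` into `α_μ(S)`, and the same with `τ⁻¹` gives equality.
-/

open Finset

section BlockSort

variable {n : ℕ} {α β : Type*} [LinearOrder α] [LinearOrder β] {b : Fin n → β}

theorem comp_sort_toLex_eq (hb : Monotone b) (w : Fin n → α) :
    b ∘ Tuple.sort (fun p => toLex (b p, w p)) = b := by
  have hsort := Tuple.monotone_sort fun p => toLex (b p, w p)
  simpa using Tuple.unique_monotone (σ := Tuple.sort _) (τ := 1)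
    (Prod.Lex.monotone_fst_ofLex.comp hsort) hb

def blockSort (b : Fin n → β) (w : Fin n → α) : Fin n → α :=
  w ∘ Tuple.sort (fun p => toLex (b p, w p))

theorem monotone_blockSort (hb : Monotone b) (w : Fin n → α) :
    Monotone fun p => toLex (b p, blockSort b w p) := by
  have h : (fun p => toLex (b p, blockSort b w p))
      = (fun p => toLex (b p, w p)) ∘ Tuple.sort (fun p => toLex (b p, w p)) := by
    funext p
    simp only [Function.comp_apply, blockSort, ← congr_fun (comp_sort_toLex_eq hb w) p]
  exact h ▸ Tuple.monotone_sort _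

theorem comp_perm_eq_of_monotone_toLex {w : Fin n → α} {ρ : Equiv.Perm (Fin n)}
    (hρ : b ∘ ρ = b) (hw : Monotone fun p => toLex (b p, w p))
    (hwρ : Monotone fun p => toLex (b p, w (ρ p))) : w ∘ ρ = w := by
  have := Tuple.unique_monotone (f := fun p => toLex (b p, w p)) (σ := ρ) (τ := 1)
    (by rwa [← hρ] at hwρ) hw
  funext p
  exact (Prod.ext_iff.mp (congr_fun this p)).2

theorem exists_perm_of_blockSort_eq (hb : Monotone b) {v₁ v₂ : Fin n → α}
    (h : blockSort b v₁ = blockSort b v₂) : ∃ ρ : Equiv.Perm (Fin n), b ∘ ρ = b ∧ v₂ ∘ ρ = v₁ := by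
  unfold blockSort at h
  have h₁ := comp_sort_toLex_eq hb v₁
  have h₂ := comp_sort_toLex_eq hb v₂
  generalize Tuple.sort (fun p => toLex (b p, v₁ p)) = π₁ at h h₁
  generalize Tuple.sort (fun p => toLex (b p, v₂ p)) = π₂ at h h₂
  refine ⟨π₂ * π₁⁻¹, funext fun p => ?_, funext fun p => ?_⟩
  · simpa using (congr_fun h₂ (π₁⁻¹ p)).trans (congr_fun h₁ (π₁⁻¹ p)).symm
  · simpa using (congr_fun h (π₁⁻¹ p)).symm

end BlockSort

theorem Fin.monotone_iff_le_succ' {β : Type*} [Preorder β] {n : ℕ} {f : Fin n → β} :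
    Monotone f ↔ ∀ i : Fin (n - 1),
      f ⟨i, by have := i.2; omega⟩ ≤ f ⟨i + 1, by have := i.2; omega⟩ := by
  cases n with
  | zero => exact ⟨fun _ i => i.elim0, fun _ i => i.elim0⟩
  | succ m => exact Fin.monotone_iff_le_succ

section Descents

variable {n : ℕ} {α : Type*} [LinearOrder α]

noncomputable def descentSet (w : Fin n → α) : Finset (Fin (n - 1)) :=
  {i | w ⟨i + 1, by have := i.2; omega⟩ < w ⟨i, by have := i.2; omega⟩}

theorem desF_eq_card_descentSet (w : Fin n → ℕ) : desF w = #(descentSet w) := by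
  unfold desF descentSet
  congr

theorem mem_descentSet {w : Fin n → α} {i : Fin (n - 1)} :
    i ∈ descentSet w ↔ w ⟨i + 1, by have := i.2; omega⟩ < w ⟨i, by have := i.2; omega⟩ := by
  simp [descentSet]

noncomputable def blockIndex (S : Finset (Fin (n - 1))) (p : Fin n) : ℕ :=
  #(S.filter fun s : Fin (n - 1) => (s : ℕ) < p)

theorem monotone_blockIndex (S : Finset (Fin (n - 1))) : Monotone (blockIndex S) :=
  fun _ _ hpq => card_le_card <| monotone_filter_right S fun _ _ h => h.trans_le hpq

theorem blockIndex_lt_succ_iff {S : Finset (Fin (n - 1))} (i : Fin (n - 1)) :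
    blockIndex S ⟨i, by have := i.2; omega⟩ < blockIndex S ⟨i + 1, by have := i.2; omega⟩ ↔
      i ∈ S := by
  constructor
  · intro hlt
    by_contra hi
    refine hlt.ne (congrArg card (filter_congr fun s hs => ?_))
    have : (s : ℕ) ≠ i := Fin.val_ne_of_ne (ne_of_mem_of_not_mem hs hi)
    simp only
    omega
  · intro hi
    refine card_lt_card ((ssubset_iff_of_subset ?_).mpr ⟨i, by simp [hi], by simp⟩)
    exact monotone_filter_right S fun _ _ h => Nat.lt_succ_of_lt h

theorem descentSet_subset_iff {w : Fin n → α} {S : Finset (Fin (n - 1))} :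
    descentSet w ⊆ S ↔ Monotone fun p => toLex (blockIndex S p, w p) := by
  simp only [Fin.monotone_iff_le_succ', Prod.Lex.toLex_le_toLex, blockIndex_lt_succ_iff]
  refine ⟨fun h i => or_iff_not_imp_left.mpr fun hi => ⟨?_, ?_⟩, fun h i hi => ?_⟩
  · exact le_antisymm (monotone_blockIndex S (Fin.mk_le_mk.mpr (Nat.le_succ _)))
      (not_lt.mp ((blockIndex_lt_succ_iff i).not.mpr hi))
  · exact not_lt.mp fun hlt => hi (h (mem_descentSet.mpr hlt))
  · exact (h i).resolve_right fun ⟨_, hle⟩ => (mem_descentSet.mp hi).not_ge hle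

end Descents

section MultisetPermutations

variable {n k : ℕ}

noncomputable def msPerms (n : ℕ) (μ : Fin k → ℕ) : Finset (Fin n → ℕ) :=
  {w ∈ Fintype.piFinset fun _ : Fin n => Icc 1 k | IsMsPermOf μ w}

theorem mem_msPerms {μ : Fin k → ℕ} {w : Fin n → ℕ} : w ∈ msPerms n μ ↔ IsMsPermOf μ w := by
  refine ⟨fun h => (mem_filter.mp h).2, fun h => mem_filter.mpr ⟨?_, h⟩⟩
  refine Fintype.mem_piFinset.mpr fun j => ?_
  obtain ⟨i, hi⟩ := h.1 j
  simp only [hi, mem_Icc]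
  omega

theorem IsMsPermOf.comp_perm {μ : Fin k → ℕ} {w : Fin n → ℕ} (h : IsMsPermOf μ w)
    (π : Equiv.Perm (Fin n)) : IsMsPermOf μ (w ∘ π) := by
  refine ⟨fun j => h.1 (π j), fun i => ?_⟩
  rw [← h.2 i, card_filter, card_filter]
  exact Equiv.sum_comp π fun j => if w j = (i : ℕ) + 1 then 1 else 0

noncomputable def letterPerm (τ : Equiv.Perm (Fin k)) : Equiv.Perm ℕ :=
  τ.viaFintypeEmbedding ⟨fun i => (i : ℕ) + 1, fun _ _ h => Fin.ext (Nat.succ_injective h)⟩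

theorem letterPerm_succ (τ : Equiv.Perm (Fin k)) (i : Fin k) :
    letterPerm τ ((i : ℕ) + 1) = (τ i : ℕ) + 1 :=
  Equiv.Perm.viaFintypeEmbedding_apply_image _ _ i

theorem IsMsPermOf.letterPerm_comp {μ : Fin k → ℕ} {w : Fin n → ℕ} {τ : Equiv.Perm (Fin k)}
    (h : IsMsPermOf (μ ∘ τ) w) : IsMsPermOf μ (letterPerm τ ∘ w) := by
  refine ⟨fun j => ?_, fun i => ?_⟩
  · obtain ⟨i, hi⟩ := h.1 j
    exact ⟨τ i, by rw [Function.comp_apply, hi, letterPerm_succ]⟩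
  · have hfib : ∀ j, letterPerm τ (w j) = (i : ℕ) + 1 ↔ w j = (τ⁻¹ i : ℕ) + 1 := fun j => by
      rw [show (i : ℕ) + 1 = letterPerm τ ((τ⁻¹ i : ℕ) + 1) by simp [letterPerm_succ],
        Equiv.apply_eq_iff_eq]
    simpa [hfib] using h.2 (τ⁻¹ i)

end MultisetPermutations

section Invariance

variable {n k : ℕ}

theorem card_filter_descentSet_subset_le (S : Finset (Fin (n - 1))) (μ : Fin k → ℕ)
    (τ : Equiv.Perm (Fin k)) :
    #{w ∈ msPerms n (μ ∘ τ) | descentSet w ⊆ S} ≤ #{w ∈ msPerms n μ | descentSet w ⊆ S} := by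
  have hb := monotone_blockIndex S
  refine card_le_card_of_injOn (fun w => blockSort (blockIndex S) (letterPerm τ ∘ w))
    (fun w hw => ?_) (fun w₁ hw₁ w₂ hw₂ h => ?_)
  · simp only [coe_filter, Set.mem_ofPred_eq, mem_msPerms] at hw ⊢
    exact ⟨hw.1.letterPerm_comp.comp_perm _, descentSet_subset_iff.mpr (monotone_blockSort hb _)⟩
  · simp only [coe_filter, Set.mem_ofPred_eq, descentSet_subset_iff] at hw₁ hw₂
    obtain ⟨ρ, hρ, hw⟩ := exists_perm_of_blockSort_eq hb h
    have hw' : w₂ ∘ ρ = w₁ := (letterPerm τ).injective.comp_left hw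
    subst hw'
    exact comp_perm_eq_of_monotone_toLex hρ hw₂.2 hw₁.2

theorem card_filter_descentSet_subset_comp_perm (S : Finset (Fin (n - 1))) (μ : Fin k → ℕ)
    (τ : Equiv.Perm (Fin k)) :
    #{w ∈ msPerms n (μ ∘ τ) | descentSet w ⊆ S} = #{w ∈ msPerms n μ | descentSet w ⊆ S} := by
  refine le_antisymm (card_filter_descentSet_subset_le S μ τ) ?_
  simpa [Function.comp_assoc] using card_filter_descentSet_subset_le S (μ ∘ τ) τ⁻¹

theorem card_filter_descentSet_subset_eq_sum {α : Type*} [LinearOrder α]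
    (A : Finset (Fin n → α)) (S : Finset (Fin (n - 1))) :
    #{w ∈ A | descentSet w ⊆ S} = ∑ T ∈ S.powerset, #{w ∈ A | descentSet w = T} := by
  rw [card_eq_sum_card_fiberwise fun w hw => mem_powerset.mpr (mem_filter.mp hw).2]
  refine sum_congr rfl fun T hT => ?_
  rw [filter_filter]
  exact congrArg card (filter_congr fun w _ => and_iff_right_of_imp fun h => h ▸ mem_powerset.mp hT)

theorem card_filter_descentSet_eq_comp_perm (S : Finset (Fin (n - 1))) (μ : Fin k → ℕ)
    (τ : Equiv.Perm (Fin k)) :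
    #{w ∈ msPerms n (μ ∘ τ) | descentSet w = S} = #{w ∈ msPerms n μ | descentSet w = S} := by
  induction S using Finset.strongInduction with
  | H S ih =>
    have h := card_filter_descentSet_subset_comp_perm S μ τ
    have hsmaller : ∀ T ∈ S.powerset.erase S, #{w ∈ msPerms n (μ ∘ τ) | descentSet w = T} =
        #{w ∈ msPerms n μ | descentSet w = T} := fun T hT =>
      ih T (ssubset_of_subset_of_ne (mem_powerset.mp (mem_of_mem_erase hT)) (ne_of_mem_erase hT))
    rw [card_filter_descentSet_subset_eq_sum, card_filter_descentSet_subset_eq_sum,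
      ← add_sum_erase _ _ (mem_powerset_self S), ← add_sum_erase _ _ (mem_powerset_self S),
      sum_congr rfl hsmaller] at h
    exact Nat.add_right_cancel h

theorem sum_msPerms_comp_perm {M : Type*} [AddCommMonoid M] (f : Finset (Fin (n - 1)) → M)
    (μ : Fin k → ℕ) (τ : Equiv.Perm (Fin k)) :
    ∑ w ∈ msPerms n (μ ∘ τ), f (descentSet w) = ∑ w ∈ msPerms n μ, f (descentSet w) := by
  simp only [← sum_fiberwise' _ descentSet f, sum_const, card_filter_descentSet_eq_comp_perm]

end Invariance

section Admissible

variable {n : ℕ}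

-- With 0-indexed positions, `s + 2 = n` is the descent at the final pair `w_{n-1} w_n`.
def IsAdmissible (S : Finset (Fin (n - 1))) : Prop :=
  ∀ s ∈ S, (s : ℕ) + 2 ≠ n ∧ ∀ t ∈ S, (t : ℕ) ≠ s + 1

theorem NDDF_and_le_last_iff (w : Fin n → ℕ) :
    (NDDF w ∧ ∀ h : 0 < n, w ⟨n - 2, by omega⟩ ≤ w ⟨n - 1, by omega⟩) ↔
      IsAdmissible (descentSet w) := by
  have hw : ∀ {i j : ℕ} (hi : i < n) (hj : j < n), i = j → w ⟨i, hi⟩ = w ⟨j, hj⟩ := by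
    rintro i j hi hj rfl; rfl
  constructor
  · rintro ⟨hndd, hlast⟩ s hs
    have hs' := mem_descentSet.mp hs
    refine ⟨fun hsn => ?_, fun t ht hts => hndd s (by omega) ⟨hs', ?_⟩⟩
    · have := hlast (by omega)
      rw [hw _ (by omega) (by omega : (s : ℕ) + 1 = n - 1),
        hw _ (by omega) (by omega : (s : ℕ) = n - 2)] at hs'
      omega
    · have := mem_descentSet.mp ht
      rwa [hw _ (by omega) (by omega : (t : ℕ) + 1 = s + 2),
        hw _ _ (by omega : (t : ℕ) = s + 1)] at this
  · intro hadm
    refine ⟨fun i hi ⟨h₁, h₂⟩ => ?_, fun hn => ?_⟩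
    · exact (hadm ⟨i, by omega⟩ (mem_descentSet.mpr h₁)).2 ⟨i + 1, by omega⟩
        (mem_descentSet.mpr h₂) rfl
    · by_contra hlt
      obtain ⟨m, rfl⟩ : ∃ m, n = m + 2 := ⟨n - 2, by
        by_contra hn
        exact hlt (hw _ _ (by omega)).le⟩
      exact (hadm ⟨m, by omega⟩ (mem_descentSet.mpr (not_le.mp hlt))).1 rfl

end Admissible

noncomputable def admissibleWeight (n : ℕ) (S : Finset (Fin (n - 1))) : ℤ[X] :=
  if IsAdmissible S then X ^ (#S + 1) * (X + 1) ^ (n - 1 - 2 * #S) else 0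

theorem Fpoly_eq_sum_msPerms (n k : ℕ) (μ : Fin k → ℕ) :
    Fpoly n k μ = ∑ w ∈ msPerms n μ, admissibleWeight n (descentSet w) := by
  rw [Fpoly, msPerms, sum_filter, sum_filter]
  refine sum_congr rfl fun w _ => ?_
  simp only [admissibleWeight, ite_and, NDDF_and_le_last_iff, desF_eq_card_descentSet]

theorem statement_18_general (n k : ℕ) (μ : Fin k → ℕ) (τ : Equiv.Perm (Fin k)) :
    Fpoly n k μ = Fpoly n k (μ ∘ τ) := by
  rw [Fpoly_eq_sum_msPerms, Fpoly_eq_sum_msPerms, sum_msPerms_comp_perm]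

/-- from the proof of Theorem 8.1 of Linusson–Shareshian–Wachs:
the polynomial `F_μ` is invariant under rearranging the parts of the weak composition
`μ` of `n`. -/
theorem statement_18 (n k : ℕ) (hn : 1 ≤ n) (μ : Fin k → ℕ) (hsum : ∑ i, μ i = n)
    (τ : Equiv.Perm (Fin k)) :
    Fpoly n k μ = Fpoly n k (μ ∘ τ) :=
  statement_18_general n k μ τ
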